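/- Let A = A₀ ⊕ A₁ be a finite-dimensional supercommutative superalgebra over a field F of characteristic zero, and suppose the supertrace form b(x,y) := str(L_{xy}) is nondegenerate, where L_z denotes left multiplication by z and str is the supertrace. Then A₁ = 0, i.e., A is purely even. -/

import Mathlib

/-!
For odd `x` the form `y ↦ str(L_{xy})` vanishes identically, so nondegeneracy forces `x = 0`.
It suffices to check homogeneous `y`. If `y` is even, `xy` is odd and `L_{xy}` swaps `A₀` and
`A₁`, so both diagonal blocks of `L_{xy}` vanish. If `y` is odd, `xy` is even; odd elements
anticommute, hence square to zero in characteristic zero, so `(xy)² = -x²y² = 0`. Then `L_{xy}`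
is a nilpotent operator preserving the grading, and each diagonal block has trace zero.
-/

noncomputable section

open DirectSum

/-- The projection of a graded algebra onto its `i`-th graded component, viewed as an
endomorphism of `A`. -/
def gradedProj {F A : Type*} [Field F] [Ring A] [Algebra F A]
    (𝒜 : ZMod 2 → Submodule F A) [GradedAlgebra 𝒜] (i : ZMod 2) : A →ₗ[F] A :=
  (𝒜 i).subtype ∘ₗ (DirectSum.component F (ZMod 2) (fun j => 𝒜 j) i) ∘ₗ
    (DirectSum.decomposeAlgEquiv 𝒜).toLinearMap

/-- The supertrace of an endomorphism of a `ℤ/2`-graded algebra: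
`str(f) = tr(f on A₀) − tr(f on A₁)`. -/
def superTrace {F A : Type*} [Field F] [Ring A] [Algebra F A]
    (𝒜 : ZMod 2 → Submodule F A) [GradedAlgebra 𝒜] (f : A →ₗ[F] A) : F :=
  LinearMap.trace F A (gradedProj 𝒜 0 ∘ₗ f ∘ₗ gradedProj 𝒜 0)
    - LinearMap.trace F A (gradedProj 𝒜 1 ∘ₗ f ∘ₗ gradedProj 𝒜 1)

theorem mul_mul_self_eq_zero_of_anticomm {R : Type*} [Ring R] {x y : R}
    (hyx : y * x = -(x * y)) (hx : x * x = 0) : (x * y) * (x * y) = 0 :=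
  calc (x * y) * (x * y) = x * (y * x) * y := by simp only [mul_assoc]
    _ = -((x * x) * (y * y)) := by rw [hyx]; simp only [mul_neg, neg_mul, mul_assoc]
    _ = 0 := by rw [hx, zero_mul, neg_zero]

namespace gradedProj

variable {F A : Type*} [Field F] [Ring A] [Algebra F A]
  (𝒜 : ZMod 2 → Submodule F A) [GradedAlgebra 𝒜]

theorem mem (i : ZMod 2) (a : A) : gradedProj 𝒜 i a ∈ 𝒜 i :=
  (decompose 𝒜 a i).2

theorem apply_of_mem {i : ZMod 2} {a : A} (h : a ∈ 𝒜 i) : gradedProj 𝒜 i a = a :=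
  decompose_of_mem_same 𝒜 h

theorem apply_of_mem_ne {i j : ZMod 2} {a : A} (h : a ∈ 𝒜 i) (hij : i ≠ j) :
    gradedProj 𝒜 j a = 0 :=
  decompose_of_mem_ne 𝒜 h hij

theorem isIdempotentElem (i : ZMod 2) : IsIdempotentElem (gradedProj 𝒜 i) :=
  LinearMap.ext fun a => apply_of_mem 𝒜 (mem 𝒜 i a)

theorem commute_mulLeft {z : A} (hz : z ∈ 𝒜 0) (i : ZMod 2) :
    Commute (gradedProj 𝒜 i) (LinearMap.mulLeft F z) :=
  LinearMap.ext fun _ => coe_decompose_mul_of_left_mem_zero 𝒜 hz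

theorem comp_mulLeft_comp_eq_zero {z : A} (hz : z ∈ 𝒜 1) (i : ZMod 2) :
    gradedProj 𝒜 i ∘ₗ LinearMap.mulLeft F z ∘ₗ gradedProj 𝒜 i = 0 :=
  LinearMap.ext fun a =>
    apply_of_mem_ne 𝒜 (SetLike.mul_mem_graded hz (mem 𝒜 i a)) (add_ne_right.mpr one_ne_zero)

end gradedProj

section SuperTrace

variable {F A : Type*} [Field F] [Ring A] [Algebra F A]
  (𝒜 : ZMod 2 → Submodule F A) [GradedAlgebra 𝒜]

theorem superTrace_add (f g : A →ₗ[F] A) :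
    superTrace 𝒜 (f + g) = superTrace 𝒜 f + superTrace 𝒜 g := by
  simp only [superTrace, LinearMap.comp_add, LinearMap.add_comp, map_add]
  ring

theorem superTrace_mulLeft_of_mem_one {z : A} (hz : z ∈ 𝒜 1) :
    superTrace 𝒜 (LinearMap.mulLeft F z) = 0 := by
  simp only [superTrace, gradedProj.comp_mulLeft_comp_eq_zero 𝒜 hz, map_zero, sub_zero]

theorem superTrace_eq_zero_of_isNilpotent [FiniteDimensional F A] {f : A →ₗ[F] A}
    (hf : IsNilpotent f) (hf_even : ∀ i, Commute (gradedProj 𝒜 i) f) : superTrace 𝒜 f = 0 := by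
  have block_trace_eq_zero (i : ZMod 2) :
      LinearMap.trace F A (gradedProj 𝒜 i ∘ₗ f ∘ₗ gradedProj 𝒜 i) = 0 := by
    have hblock : gradedProj 𝒜 i ∘ₗ f ∘ₗ gradedProj 𝒜 i = gradedProj 𝒜 i * f := by
      rw [← Module.End.mul_eq_comp, ← Module.End.mul_eq_comp, ← (hf_even i).eq, ← mul_assoc,
        (gradedProj.isIdempotentElem 𝒜 i).eq]
    rw [hblock]
    exact (LinearMap.isNilpotent_trace_of_isNilpotent
      ((hf_even i).isNilpotent_mul_left hf)).eq_zero
  rw [superTrace, block_trace_eq_zero, block_trace_eq_zero, sub_zero]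

theorem superTrace_mulLeft_of_mem_zero_of_isNilpotent [FiniteDimensional F A] {z : A}
    (hz : z ∈ 𝒜 0) (hn : IsNilpotent z) : superTrace 𝒜 (LinearMap.mulLeft F z) = 0 :=
  superTrace_eq_zero_of_isNilpotent 𝒜 ((LinearMap.isNilpotent_mulLeft_iff F z).2 hn)
    (gradedProj.commute_mulLeft 𝒜 hz)

theorem superTrace_mulLeft_mul_eq_zero [CharZero F] [FiniteDimensional F A]
    (hanti : ∀ x ∈ 𝒜 1, ∀ y ∈ 𝒜 1, y * x = -(x * y)) {x : A} (hx : x ∈ 𝒜 1) (y : A) :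
    superTrace 𝒜 (LinearMap.mulLeft F (x * y)) = 0 := by
  induction y using DirectSum.Decomposition.inductionOn 𝒜 with
  | zero => simp [superTrace]
  | add y y' hy hy' =>
    have hsplit : LinearMap.mulLeft F (x * (y + y')) =
        LinearMap.mulLeft F (x * y) + LinearMap.mulLeft F (x * y') := by
      ext a; simp only [LinearMap.mulLeft_apply, LinearMap.add_apply, mul_add, add_mul]
    rw [hsplit, superTrace_add, hy, hy', add_zero]
  | @homogeneous i y =>
    have hxy := SetLike.mul_mem_graded hx y.2
    obtain rfl | rfl := (by decide : ∀ j : ZMod 2, j = 0 ∨ j = 1) i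
    · exact superTrace_mulLeft_of_mem_one 𝒜 (add_zero (1 : ZMod 2) ▸ hxy)
    · have : IsAddTorsionFree A := .of_isTorsionFree F A
      have hx2 : x * x = 0 := self_eq_neg.mp (hanti x hx x hx)
      refine superTrace_mulLeft_of_mem_zero_of_isNilpotent 𝒜 hxy ⟨2, ?_⟩
      rw [pow_two]
      exact mul_mul_self_eq_zero_of_anticomm (hanti x hx y y.2) hx2

end SuperTrace

/-- A finite-dimensional supercommutative superalgebra over a field of
characteristic zero whose supertrace form `b(x,y) = str(L_{xy})` is nondegenerate is
purely even: `A₁ = 0`. -/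
theorem odd_part_eq_bot_of_supertrace_nondegenerate
    {F A : Type*} [Field F] [CharZero F] [Ring A] [Algebra F A] [FiniteDimensional F A]
    (𝒜 : ZMod 2 → Submodule F A) [GradedAlgebra 𝒜]
    (hcomm : ∀ (i j : ZMod 2), ∀ x ∈ 𝒜 i, ∀ y ∈ 𝒜 j,
      x * y = (-1 : A) ^ (i.val * j.val) * (y * x))
    (hnd : ∀ x : A, (∀ y : A, superTrace 𝒜 (LinearMap.mulLeft F (x * y)) = 0) → x = 0) :
    𝒜 1 = ⊥ := by
  have hanti : ∀ x ∈ 𝒜 1, ∀ y ∈ 𝒜 1, y * x = -(x * y) := fun x hx y hy => by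
    simpa [show (1 : ZMod 2).val = 1 from rfl] using hcomm 1 1 y hy x hx
  exact (Submodule.eq_bot_iff _).2 fun x hx =>
    hnd x (superTrace_mulLeft_mul_eq_zero 𝒜 hanti hx)
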